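/- Kernel elements of the linearized operator (eigenvalue 0): Let d ∈ ℝ^N with |d| < 1. (a) If d ≠ 0 and e = d/|d|, then the function g(y) = (1−|d|²)^{1/(p−1)} (y·e + |d|) (1+d·y)^{−(p+1)/(p−1)} satisfies 𝓛g(y) + ψ(d,y) g(y) = 0 for every y ∈ B. (b) If e ∈ ℝ^N is any unit vector with e·d = 0, then the function g(y) = (1−|d|²)^{(p+1)/(2(p−1))} (y·e) (1+d·y)^{−(p+1)/(p−1)} satisfies 𝓛g(y) + ψ(d,y) g(y) = 0 for every y ∈ B. (Equivalently, the pairs (g, 0) are eigenfunctions of the linearized operator L_d(q₁,q₂) = (q₂, 𝓛q₁ + ψ(d,·)q₁ − ((p+3)/(p−1))q₂ − 2y·∇q₂) with eigenvalue λ = 0.) -/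

import Mathlib

open MeasureTheory Metric
open scoped RealInnerProductSpace

noncomputable section

/-- The degenerate elliptic operator
`𝓛w(y) = Δw(y) − Σ_{i,j} y_i y_j ∂²_{ij}w(y) − (2(p+1)/(p−1)) y·∇w(y)`. -/
def calL (N : ℕ) (p : ℝ) (w : EuclideanSpace ℝ (Fin N) → ℝ)
    (y : EuclideanSpace ℝ (Fin N)) : ℝ :=
  (∑ i : Fin N, fderiv ℝ (fun z => fderiv ℝ w z (EuclideanSpace.single i 1)) y
      (EuclideanSpace.single i 1))
    - fderiv ℝ (fun z => fderiv ℝ w z y) y y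
    - (2 * (p + 1) / (p - 1)) * fderiv ℝ w y y

/-- The potential `ψ(d,y)`. -/
def psiFun (N : ℕ) (p : ℝ) (d y : EuclideanSpace ℝ (Fin N)) : ℝ :=
  2 * (p + 1) / (p - 1) ^ 2 * (p * (1 - ‖d‖ ^ 2) / (1 + ⟪d, y⟫) ^ 2 - 1)

/-!
Both families are instances of `g(y) = C (y·v + d·v) (1 + d·y)^γ` with `γ = -(p+1)/(p-1)`,
for `v = d/|d|` and `v = e` respectively, and every such `g` lies in the kernel of
`𝓛 + ψ(d,·)`. Writing `s = 1 + d·y` and `u = y·v + d·v`, the Hessian of `g` is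
`Cγ s^(γ-1) (v⊗d + d⊗v) + Cγ(γ-1) u s^(γ-2) d⊗d`, so `𝓛g + ψ g` is `C s^γ` times a
rational function of `s`, `y·v`, `d·v`, `|d|²` and `p`, which vanishes identically.
-/

section AffineMulRpow

variable {F : Type*} [NormedAddCommGroup F] [InnerProductSpace ℝ F]

theorem one_add_inner_pos {d y : F} (hd : ‖d‖ < 1) (hy : ‖y‖ ≤ 1) : 0 < 1 + ⟪d, y⟫ := by
  have hdy : ‖d‖ * ‖y‖ < 1 := by nlinarith [norm_nonneg d, norm_nonneg y]
  linarith [neg_abs_le ⟪d, y⟫, abs_real_inner_le_norm d y]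

theorem hasFDerivAt_affine_mul_rpow (C γ c : ℝ) (d v z : F) (hz : 0 < 1 + ⟪d, z⟫) :
    HasFDerivAt (fun w : F => C * (⟪w, v⟫ + c) * (1 + ⟪d, w⟫) ^ γ)
      ((C * (1 + ⟪d, z⟫) ^ γ) • innerSL ℝ v +
        (C * (⟪z, v⟫ + c) * (γ * (1 + ⟪d, z⟫) ^ (γ - 1))) • innerSL ℝ d) z := by
  have hbase : HasFDerivAt (fun w : F => 1 + ⟪d, w⟫) (innerSL ℝ d) z := by
    simpa using ((innerSL ℝ d).hasFDerivAt (x := z)).const_add 1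
  have hpow : HasFDerivAt (fun w : F => (1 + ⟪d, w⟫) ^ γ)
      ((γ * (1 + ⟪d, z⟫) ^ (γ - 1)) • innerSL ℝ d) z :=
    hbase.rpow_const (Or.inl hz.ne')
  have haff : HasFDerivAt (fun w : F => C * (⟪w, v⟫ + c)) (C • innerSL ℝ v) z := by
    have h : HasFDerivAt (fun w : F => ⟪w, v⟫ + c) (innerSL ℝ v) z := by
      simpa only [innerSL_apply_apply, real_inner_comm v] using
        ((innerSL ℝ v).hasFDerivAt (x := z)).add_const c
    simpa using h.const_mul C
  refine (haff.fun_mul hpow).congr_fderiv ?_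
  ext k
  simp only [add_apply, smul_apply, smul_eq_mul]
  ring

theorem fderiv_affine_mul_rpow_apply (C γ c : ℝ) (d v z : F) (hz : 0 < 1 + ⟪d, z⟫) (h : F) :
    fderiv ℝ (fun w : F => C * (⟪w, v⟫ + c) * (1 + ⟪d, w⟫) ^ γ) z h
      = C * (1 + ⟪d, z⟫) ^ γ * ⟪v, h⟫
        + C * (⟪z, v⟫ + c) * (γ * (1 + ⟪d, z⟫) ^ (γ - 1)) * ⟪d, h⟫ := by
  rw [(hasFDerivAt_affine_mul_rpow C γ c d v z hz).fderiv]
  simp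

theorem fderiv_fderiv_affine_mul_rpow_apply (C γ c : ℝ) (d v y : F) (hy : 0 < 1 + ⟪d, y⟫)
    (h k : F) :
    fderiv ℝ (fun z : F =>
        fderiv ℝ (fun w : F => C * (⟪w, v⟫ + c) * (1 + ⟪d, w⟫) ^ γ) z h) y k
      = C * γ * (1 + ⟪d, y⟫) ^ (γ - 1) * (⟪v, h⟫ * ⟪d, k⟫ + ⟪d, h⟫ * ⟪v, k⟫)
        + C * γ * (γ - 1) * (⟪y, v⟫ + c) * (1 + ⟪d, y⟫) ^ (γ - 2) * (⟪d, h⟫ * ⟪d, k⟫) := by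
  have hU : IsOpen {z : F | 0 < 1 + ⟪d, z⟫} :=
    isOpen_lt continuous_const (continuous_const.add (continuous_const.inner continuous_id))
  -- near `y` the directional derivative is a sum of two functions of the same shape
  -- (with `v = 0`, `c = 1` in the first)
  have hev : (fun z : F =>
        fderiv ℝ (fun w : F => C * (⟪w, v⟫ + c) * (1 + ⟪d, w⟫) ^ γ) z h)
      =ᶠ[nhds y] fun z : F =>
        C * ⟪v, h⟫ * (⟪z, (0 : F)⟫ + 1) * (1 + ⟪d, z⟫) ^ γ
          + C * γ * ⟪d, h⟫ * (⟪z, v⟫ + c) * (1 + ⟪d, z⟫) ^ (γ - 1) := by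
    filter_upwards [hU.mem_nhds hy] with z hz
    rw [fderiv_affine_mul_rpow_apply C γ c d v z hz h, inner_zero_right]
    ring
  rw [hev.fderiv_eq,
    ((hasFDerivAt_affine_mul_rpow (C * ⟪v, h⟫) γ 1 d 0 y hy).fun_add
      (hasFDerivAt_affine_mul_rpow (C * γ * ⟪d, h⟫) (γ - 1) c d v y hy)).fderiv,
    show γ - 1 - 1 = γ - 2 by ring]
  simp only [map_zero, smul_zero, inner_zero_right, zero_add, mul_one, add_apply, smul_apply,
    coe_innerSL_apply, smul_eq_mul]
  ring

variable {N : ℕ}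
local notation "E" => EuclideanSpace ℝ (Fin N)

theorem laplacian_affine_mul_rpow (C γ c : ℝ) (d v y : E) (hy : 0 < 1 + ⟪d, y⟫) :
    ∑ i : Fin N, fderiv ℝ (fun z : E =>
        fderiv ℝ (fun w : E => C * (⟪w, v⟫ + c) * (1 + ⟪d, w⟫) ^ γ) z
          (EuclideanSpace.single i 1)) y (EuclideanSpace.single i 1)
      = 2 * C * γ * (1 + ⟪d, y⟫) ^ (γ - 1) * ⟪v, d⟫
        + C * γ * (γ - 1) * (⟪y, v⟫ + c) * (1 + ⟪d, y⟫) ^ (γ - 2) * ‖d‖ ^ 2 := by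
  have htrace (a b : E) :
      ∑ i : Fin N, ⟪a, EuclideanSpace.single i 1⟫ * ⟪b, EuclideanSpace.single i 1⟫ = ⟪a, b⟫ := by
    simpa [EuclideanSpace.basisFun_apply, real_inner_comm b] using
      (EuclideanSpace.basisFun (Fin N) ℝ).sum_inner_mul_inner a b
  simp only [fderiv_fderiv_affine_mul_rpow_apply C γ c d v y hy, Finset.sum_add_distrib,
    ← Finset.mul_sum, htrace, real_inner_comm d v, real_inner_self_eq_norm_sq]
  ring

theorem calL_affine_mul_rpow_add_psiFun_mul (p : ℝ) (hp : p ≠ 1) (C c : ℝ) (d v y : E)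
    (hc : c = ⟪d, v⟫) (hy : 0 < 1 + ⟪d, y⟫) :
    calL N p (fun z => C * (⟪z, v⟫ + c) * (1 + ⟪d, z⟫) ^ (-((p + 1) / (p - 1)))) y
      + psiFun N p d y * (C * (⟪y, v⟫ + c) * (1 + ⟪d, y⟫) ^ (-((p + 1) / (p - 1)))) = 0 := by
  set γ : ℝ := -((p + 1) / (p - 1)) with hγ
  have hp' : p - 1 ≠ 0 := sub_ne_zero_of_ne hp
  have hpow1 : (1 + ⟪d, y⟫) ^ (γ - 1) = (1 + ⟪d, y⟫) ^ γ / (1 + ⟪d, y⟫) := by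
    rw [Real.rpow_sub hy, Real.rpow_one]
  have hpow2 : (1 + ⟪d, y⟫) ^ (γ - 2) = (1 + ⟪d, y⟫) ^ γ / (1 + ⟪d, y⟫) ^ 2 := by
    rw [Real.rpow_sub hy, Real.rpow_two]
  rw [calL, psiFun, laplacian_affine_mul_rpow C γ c d v y hy,
    fderiv_fderiv_affine_mul_rpow_apply C γ c d v y hy, fderiv_affine_mul_rpow_apply C γ c d v y hy,
    hpow1, hpow2, hc, real_inner_comm v d, real_inner_comm v y]
  have hs : 1 + ⟪d, y⟫ ≠ 0 := hy.ne'
  generalize (1 + ⟪d, y⟫) ^ γ = A at *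
  generalize ⟪d, y⟫ = t at *
  rw [hγ]
  field_simp
  ring

end AffineMulRpow

theorem stmt4_general (N : ℕ) (p : ℝ) (hp1 : 1 < p)
    (d : EuclideanSpace ℝ (Fin N)) (hd : ‖d‖ < 1) :
    -- (a) the radial direction
    (d ≠ 0 →
      ∀ g : EuclideanSpace ℝ (Fin N) → ℝ,
        g = (fun y => (1 - ‖d‖ ^ 2) ^ (1 / (p - 1)) * (⟪y, ‖d‖⁻¹ • d⟫ + ‖d‖) *
          (1 + ⟪d, y⟫) ^ (-((p + 1) / (p - 1)))) →
        ∀ y ∈ ball (0 : EuclideanSpace ℝ (Fin N)) 1,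
          calL N p g y + psiFun N p d y * g y = 0) ∧
    -- (b) the orthogonal directions
    (∀ e : EuclideanSpace ℝ (Fin N), ‖e‖ = 1 → ⟪e, d⟫ = 0 →
      ∀ g : EuclideanSpace ℝ (Fin N) → ℝ,
        g = (fun y => (1 - ‖d‖ ^ 2) ^ ((p + 1) / (2 * (p - 1))) * ⟪y, e⟫ *
          (1 + ⟪d, y⟫) ^ (-((p + 1) / (p - 1)))) →
        ∀ y ∈ ball (0 : EuclideanSpace ℝ (Fin N)) 1,
          calL N p g y + psiFun N p d y * g y = 0) := by
  have hs {y : EuclideanSpace ℝ (Fin N)} (hy : y ∈ ball 0 1) : 0 < 1 + ⟪d, y⟫ :=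
    one_add_inner_pos hd (mem_ball_zero_iff.mp hy).le
  refine ⟨fun hd0 g hg y hy => ?_, fun e _ hed g hg y hy => ?_⟩
  · have hc : ‖d‖ = ⟪d, ‖d‖⁻¹ • d⟫ := by
      rw [real_inner_smul_right, real_inner_self_eq_norm_sq]
      field_simp [norm_ne_zero_iff.mpr hd0]
    subst hg
    exact calL_affine_mul_rpow_add_psiFun_mul p hp1.ne' _ _ d _ y hc (hs hy)
  · have hg' : g = fun z => (1 - ‖d‖ ^ 2) ^ ((p + 1) / (2 * (p - 1))) * (⟪z, e⟫ + 0) *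
        (1 + ⟪d, z⟫) ^ (-((p + 1) / (p - 1))) := by
      simpa only [add_zero] using hg
    subst hg'
    simpa only [add_zero] using calL_affine_mul_rpow_add_psiFun_mul p hp1.ne' _ 0 d e y
      (by rw [real_inner_comm, hed]) (hs hy)

/-- Kernel elements of the linearized operator (eigenvalue 0). -/
theorem stmt4 (N : ℕ) (p : ℝ) (hN : 1 ≤ N) (hp1 : 1 < p)
    (hpc : 2 ≤ N → p < 1 + 4 / ((N : ℝ) - 1))
    (d : EuclideanSpace ℝ (Fin N)) (hd : ‖d‖ < 1) :
    -- (a) the radial direction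
    (d ≠ 0 →
      ∀ g : EuclideanSpace ℝ (Fin N) → ℝ,
        g = (fun y => (1 - ‖d‖ ^ 2) ^ (1 / (p - 1)) * (⟪y, ‖d‖⁻¹ • d⟫ + ‖d‖) *
          (1 + ⟪d, y⟫) ^ (-((p + 1) / (p - 1)))) →
        ∀ y ∈ ball (0 : EuclideanSpace ℝ (Fin N)) 1,
          calL N p g y + psiFun N p d y * g y = 0) ∧
    -- (b) the orthogonal directions
    (∀ e : EuclideanSpace ℝ (Fin N), ‖e‖ = 1 → ⟪e, d⟫ = 0 →
      ∀ g : EuclideanSpace ℝ (Fin N) → ℝ,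
        g = (fun y => (1 - ‖d‖ ^ 2) ^ ((p + 1) / (2 * (p - 1))) * ⟪y, e⟫ *
          (1 + ⟪d, y⟫) ^ (-((p + 1) / (p - 1)))) →
        ∀ y ∈ ball (0 : EuclideanSpace ℝ (Fin N)) 1,
          calL N p g y + psiFun N p d y * g y = 0) :=
  stmt4_general N p hp1 d hd
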